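/- Let 𝒜 be linear from Hermitian matrices to ℝ^m with the property that 𝒜(X) = 0 and X ⪰ 0 imply X = 0, let b ∈ ℝ^m, λ > 0, and define φ(X) = (1/2)‖𝒜(X) − b‖₂² + λ(Tr(X) − ‖X‖_F) on the PSD cone. Then φ is coercive on the PSD cone: φ(X) → ∞ as ‖X‖_F → ∞ with X ⪰ 0. -/

import Mathlib

open Matrix
open scoped ComplexOrder

noncomputable def frob {n : ℕ} (X : Matrix (Fin n) (Fin n) ℂ) : ℝ :=
  Real.sqrt ((Xᴴ * X).trace.re)

noncomputable def enorm {m : ℕ} (v : Fin m → ℝ) : ℝ :=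
  Real.sqrt (∑ i, (v i) ^ 2)

/-- Operator norm of a linear map `𝒜` restricted to Hermitian matrices,
with Frobenius norm on the source and Euclidean norm on the target. -/
noncomputable def opNormL {n m : ℕ}
    (𝒜 : Matrix (Fin n) (Fin n) ℂ →ₗ[ℝ] (Fin m → ℝ)) : ℝ :=
  sSup {t : ℝ | ∃ X : Matrix (Fin n) (Fin n) ℂ, X.IsHermitian ∧ X ≠ 0 ∧
    t = _root_.enorm (𝒜 X) / frob X}

noncomputable def phi {n m : ℕ} (𝒜 : Matrix (Fin n) (Fin n) ℂ →ₗ[ℝ] (Fin m → ℝ))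
    (b : Fin m → ℝ) (lam : ℝ) (X : Matrix (Fin n) (Fin n) ℂ) : ℝ :=
  (1 / 2) * (_root_.enorm (𝒜 X - b)) ^ 2 + lam * (X.trace.re - frob X)


/-!
On the PSD cone, `‖𝒜 X‖₂ ≥ c ‖X‖_F` for some `c > 0`: the cone is closed, so its intersection
with the unit sphere is compact, and `‖𝒜 ·‖₂` has a positive minimum there because `𝒜` does not
vanish on nonzero PSD matrices. The penalty `λ (Tr X - ‖X‖_F)` is nonnegative on the cone, since a
PSD matrix is `Bᴴ B` and `‖Bᴴ B‖_F ≤ ‖B‖_F² = Tr (Bᴴ B)`. Hence `φ X ≥ ½ (c ‖X‖_F - ‖b‖₂)²`.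
-/

theorem LinearMap.exists_pos_mul_norm_le_norm_of_cone {E F : Type*}
    [NormedAddCommGroup E] [NormedSpace ℝ E] [FiniteDimensional ℝ E]
    [NormedAddCommGroup F] [NormedSpace ℝ F] (f : E →ₗ[ℝ] F) {K : Set E} (hK : IsClosed K)
    (hsmul : ∀ x ∈ K, ∀ t : ℝ, 0 < t → t • x ∈ K) (hker : ∀ x ∈ K, f x = 0 → x = 0) :
    ∃ c, 0 < c ∧ ∀ x ∈ K, c * ‖x‖ ≤ ‖f x‖ := by
  obtain ⟨c, hc, hcS⟩ := ((isCompact_sphere 0 1).inter_left hK).exists_forall_le'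
    f.continuous_of_finiteDimensional.norm.continuousOn (a := 0)
    fun x ⟨hxK, hx1⟩ => norm_pos_iff.2 fun h0 => by simp [hker x hxK h0] at hx1
  refine ⟨c, hc, fun x hxK => ?_⟩
  rcases eq_or_ne x 0 with rfl | hx
  · simp
  have hxpos : 0 < ‖x‖ := norm_pos_iff.2 hx
  have := hcS (‖x‖⁻¹ • x) ⟨hsmul x hxK _ (inv_pos.2 hxpos), by simp [norm_smul, hxpos.ne']⟩
  rwa [map_smul, norm_smul, norm_inv, norm_norm, le_inv_mul_iff₀ hxpos, mul_comm] at this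

theorem Matrix.isClosed_setOf_posSemidef {𝕜 ι : Type*} [RCLike 𝕜] [Fintype ι] :
    IsClosed {X : Matrix ι ι 𝕜 | X.PosSemidef} := by
  simp only [posSemidef_iff_dotProduct_mulVec, Set.ofPred_and, Set.ofPred_forall]
  exact (isClosed_eq continuous_id.matrix_conjTranspose continuous_id).inter <|
    isClosed_iInter fun x => isClosed_le continuous_const
      (continuous_const.dotProduct (continuous_id.matrix_mulVec continuous_const))

open scoped MatrixOrder in
theorem Matrix.PosSemidef.exists_eq_conjTranspose_mul_self {𝕜 ι : Type*} [RCLike 𝕜] [Fintype ι]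
    [DecidableEq ι] {X : Matrix ι ι 𝕜} (hX : X.PosSemidef) : ∃ B : Matrix ι ι 𝕜, X = Bᴴ * B :=
  ⟨CFC.sqrt X, by
    rw [← star_eq_conjTranspose, (CFC.sqrt_nonneg X).isSelfAdjoint.star_eq,
      CFC.sqrt_mul_sqrt_self X hX.nonneg]⟩

theorem frob_sq {n : ℕ} (X : Matrix (Fin n) (Fin n) ℂ) : frob X ^ 2 = (Xᴴ * X).trace.re :=
  Real.sq_sqrt (Complex.nonneg_iff.1 (posSemidef_conjTranspose_mul_self X).trace_nonneg).1

theorem enorm_eq_norm_toLp {m : ℕ} (v : Fin m → ℝ) : _root_.enorm v = ‖WithLp.toLp 2 v‖ := by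
  simp [_root_.enorm, EuclideanSpace.norm_eq]

section Frobenius

attribute [local instance] Matrix.frobeniusNormedAddCommGroup Matrix.frobeniusNormedSpace

theorem frob_eq_norm {n : ℕ} (X : Matrix (Fin n) (Fin n) ℂ) : frob X = ‖X‖ := by
  rw [← sq_eq_sq₀ (a := frob X) (Real.sqrt_nonneg _) (norm_nonneg X), frob_sq]
  change _ = ‖WithLp.toLp 2 fun i => WithLp.toLp 2 (X i)‖ ^ 2
  simp only [PiLp.norm_sq_eq_of_L2, trace, diag_apply, mul_apply, conjTranspose_apply,
    Complex.re_sum, RCLike.star_def, Complex.conj_mul', ← Complex.ofReal_pow, Complex.ofReal_re]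
  exact Finset.sum_comm

theorem frob_le_re_trace_of_posSemidef {n : ℕ} {X : Matrix (Fin n) (Fin n) ℂ}
    (hX : X.PosSemidef) : frob X ≤ X.trace.re := by
  obtain ⟨B, rfl⟩ := hX.exists_eq_conjTranspose_mul_self
  calc frob (Bᴴ * B) = ‖Bᴴ * B‖ := frob_eq_norm _
    _ ≤ ‖Bᴴ‖ * ‖B‖ := frobenius_norm_mul _ _
    _ = frob B ^ 2 := by rw [frobenius_norm_conjTranspose, ← frob_eq_norm, sq]
    _ = (Bᴴ * B).trace.re := frob_sq B

theorem exists_pos_mul_frob_le_enorm_of_posSemidef {n m : ℕ}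
    (𝒜 : Matrix (Fin n) (Fin n) ℂ →ₗ[ℝ] (Fin m → ℝ))
    (hinj : ∀ X : Matrix (Fin n) (Fin n) ℂ, X.PosSemidef → 𝒜 X = 0 → X = 0) :
    ∃ c, 0 < c ∧ ∀ X : Matrix (Fin n) (Fin n) ℂ, X.PosSemidef →
      c * frob X ≤ _root_.enorm (𝒜 X) := by
  obtain ⟨c, hc, h⟩ :=
    ((WithLp.linearEquiv 2 ℝ (Fin m → ℝ)).symm.toLinearMap ∘ₗ 𝒜).exists_pos_mul_norm_le_norm_of_cone
      isClosed_setOf_posSemidef (fun X hX t ht => hX.smul ht.le)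
      (fun X hX h0 => hinj X hX (by simpa using h0))
  exact ⟨c, hc, fun X hX => by simpa [frob_eq_norm, enorm_eq_norm_toLp] using h X hX⟩

end Frobenius

theorem half_enorm_sq_le_phi {n m : ℕ} (𝒜 : Matrix (Fin n) (Fin n) ℂ →ₗ[ℝ] (Fin m → ℝ))
    (b : Fin m → ℝ) {lam : ℝ} (hlam : 0 ≤ lam) {X : Matrix (Fin n) (Fin n) ℂ}
    (hX : X.PosSemidef) : (1 / 2) * _root_.enorm (𝒜 X - b) ^ 2 ≤ phi 𝒜 b lam X :=
  le_add_of_nonneg_right (mul_nonneg hlam (sub_nonneg.2 (frob_le_re_trace_of_posSemidef hX)))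

theorem stmt_16 {n m : ℕ}
    (𝒜 : Matrix (Fin n) (Fin n) ℂ →ₗ[ℝ] (Fin m → ℝ))
    (hinj : ∀ X : Matrix (Fin n) (Fin n) ℂ, X.PosSemidef → 𝒜 X = 0 → X = 0)
    (b : Fin m → ℝ) (lam : ℝ) (hlam : 0 < lam) :
    ∀ M : ℝ, ∃ R : ℝ, ∀ X : Matrix (Fin n) (Fin n) ℂ, X.PosSemidef →
      R ≤ frob X → M ≤ phi 𝒜 b lam X := by
  intro M
  obtain ⟨c, hc, hcoer⟩ := exists_pos_mul_frob_le_enorm_of_posSemidef 𝒜 hinj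
  refine ⟨(_root_.enorm b + 2 * |M| + 1) / c, fun X hX hR => ?_⟩
  have hres : 2 * |M| + 1 ≤ _root_.enorm (𝒜 X - b) :=
    calc 2 * |M| + 1 ≤ c * frob X - _root_.enorm b := by linarith [(div_le_iff₀' hc).1 hR]
      _ ≤ _root_.enorm (𝒜 X) - _root_.enorm b := by linarith [hcoer X hX]
      _ ≤ _root_.enorm (𝒜 X - b) := by
        simpa only [enorm_eq_norm_toLp, WithLp.toLp_sub] using norm_sub_norm_le _ _
  calc M ≤ (1 / 2) * (2 * |M| + 1) ^ 2 := by nlinarith [abs_nonneg M, le_abs_self M]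
    _ ≤ (1 / 2) * _root_.enorm (𝒜 X - b) ^ 2 := by gcongr
    _ ≤ phi 𝒜 b lam X := half_enorm_sq_le_phi 𝒜 b hlam.le hX
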